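/- Let L ≥ 1 be an integer and define G(ω) = Σ_{k=0}^{L} cos(π(k/L − 1/2)) e^{2πi k ω}. Then for every ω ∈ [0, 1/2] with 4L²ω² ≠ 1, |G(ω)| ≤ (2/π)·L/|1 − 4L²ω²| + 8/(πL). -/

import Mathlib

/-!
With `φ = π / L` and `z = exp (2πiω)` the coefficients of `G` are `sin (k φ)`, and the three-term
recurrence of `sin (k φ)` gives `2 (cos 2πω - cos φ) G(ω) = sin φ (1 + z ^ L)`, so
`‖G(ω)‖ ≤ |sin φ| / |cos 2πω - cos φ|`. For `L ≥ 3` and `4L²ω² ≥ 2` put `u, v = ω ± 1 / (2L)`: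
then `cos 2πω - cos φ = -2 sin πu sin πv` and `|1 - 4L²ω²| = 4L²uv`, and the claim reduces to
`π² uv ≤ (1 + 16uv) sin πu sin πv`, which follows from `sin x ≥ x - x³/6` when `u ≤ 1/2` and from
`sin πu sin πv ≥ cos π(u - v) ≥ 1/2` otherwise. In all other cases the trivial bound
`‖G(ω)‖ ≤ ∑ sin (k φ) = cot (π / (2L)) ≤ 2L/π` suffices.
-/

open scoped Real
open Finset

/-- `G(ω) = Σ_{k=0}^{L} cos(π(k/L − 1/2)) e^{2πi k ω}`. -/
noncomputable def Gfun (L : ℕ) (ω : ℝ) : ℂ :=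
  ∑ k ∈ Finset.range (L + 1),
    (Real.cos (Real.pi * ((k : ℝ) / L - 1 / 2)) : ℂ) *
      Complex.exp (2 * Real.pi * Complex.I * (k : ℂ) * (ω : ℂ))

open Real

theorem mul_sum_sin_mul_pow (φ : ℝ) (z : ℂ) (n : ℕ) :
    (1 - 2 * cos φ * z + z ^ 2) * ∑ k ∈ range (n + 1), (sin (k * φ) : ℂ) * z ^ k =
      sin φ * z - sin ((n + 1) * φ) * z ^ (n + 1) + sin (n * φ) * z ^ (n + 2) := by
  induction n with
  | zero => simp
  | succ n ih =>
    have hrec : (sin ((n + 1 + 1) * φ) : ℂ) =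
        2 * cos φ * sin ((n + 1) * φ) - sin (n * φ) := by
      rw [show (n + 1 + 1) * φ = (n + 1) * φ + φ by ring,
        show n * φ = (n + 1) * φ - φ by ring, sin_add, sin_sub]
      push_cast
      ring
    rw [sum_range_succ, mul_add, ih]
    simp only [Nat.cast_add, Nat.cast_one]
    linear_combination z ^ (n + 2) * hrec

theorem mul_sum_sin_pi_div_mul_pow (L : ℕ) (z : ℂ) :
    (1 - 2 * cos (π / L) * z + z ^ 2) *
        ∑ k ∈ range (L + 1), (sin (k * (π / L)) : ℂ) * z ^ k =
      sin (π / L) * z * (1 + z ^ L) := by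
  rcases eq_or_ne L 0 with rfl | hL
  · simp
  have hπ : (L : ℝ) * (π / L) = π := by field_simp
  rw [mul_sum_sin_mul_pow, add_mul, one_mul, hπ, add_comm π, sin_add_pi, sin_pi,
    Complex.ofReal_neg, Complex.ofReal_zero]
  ring

theorem Gfun_eq_sum_sin (L : ℕ) (ω : ℝ) :
    Gfun L ω =
      ∑ k ∈ range (L + 1),
        (sin (k * (π / L)) : ℂ) * Complex.exp ((2 * π * ω : ℝ) * Complex.I) ^ k := by
  refine sum_congr rfl fun k _ => ?_
  rw [show π * ((k : ℝ) / L - 1 / 2) = k * (π / L) - π / 2 by ring, cos_sub_pi_div_two,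
    ← Complex.exp_nat_mul]
  push_cast
  ring_nf

theorem cos_sub_cos_mul_Gfun (L : ℕ) (ω : ℝ) :
    2 * (cos (2 * π * ω) - cos (π / L) : ℂ) * Gfun L ω =
      sin (π / L) * (1 + Complex.exp ((2 * π * ω : ℝ) * Complex.I) ^ L) := by
  rw [Gfun_eq_sum_sin]
  set θ := 2 * π * ω
  set z := Complex.exp (θ * Complex.I)
  have hinv : Complex.exp (-θ * Complex.I) * z = 1 := by
    rw [← Complex.exp_add, neg_mul, neg_add_cancel, Complex.exp_zero]
  have hcos : 2 * (cos θ : ℂ) * z = 1 + z ^ 2 := by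
    rw [Complex.ofReal_cos, Complex.two_cos]
    linear_combination hinv
  apply mul_left_cancel₀ (Complex.exp_ne_zero _ : z ≠ 0)
  linear_combination mul_sum_sin_pi_div_mul_pow L z +
    (∑ k ∈ range (L + 1), (sin (k * (π / L)) : ℂ) * z ^ k) * hcos

theorem norm_Gfun_le (L : ℕ) {ω : ℝ} (h : cos (2 * π * ω) ≠ cos (π / L)) :
    ‖Gfun L ω‖ ≤ |sin (π / L)| / |cos (2 * π * ω) - cos (π / L)| := by
  have hΔ : 0 < |cos (2 * π * ω) - cos (π / L)| := abs_pos.2 (sub_ne_zero.2 h)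
  have hz : ‖1 + Complex.exp ((2 * π * ω : ℝ) * Complex.I) ^ L‖ ≤ 2 := by
    refine (norm_add_le _ _).trans ?_
    rw [norm_one, norm_pow, Complex.norm_exp_ofReal_mul_I, one_pow]
    norm_num
  have hnorm := congrArg norm (cos_sub_cos_mul_Gfun L ω)
  rw [norm_mul, norm_mul, norm_mul, ← Complex.ofReal_sub, Complex.norm_real, Complex.norm_real,
    Real.norm_eq_abs, Real.norm_eq_abs, Complex.norm_ofNat] at hnorm
  rw [le_div_iff₀ hΔ]
  nlinarith [abs_nonneg (sin (π / L)), norm_nonneg (Gfun L ω)]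

theorem sin_natCast_mul_pi_div_nonneg {k L : ℕ} (hk : k ≤ L) : 0 ≤ sin (k * (π / L)) := by
  rcases eq_or_ne L 0 with rfl | hL
  · simp
  refine sin_nonneg_of_nonneg_of_le_pi (by positivity) ?_
  calc (k : ℝ) * (π / L) ≤ L * (π / L) := by gcongr
    _ = π := by field_simp

theorem norm_Gfun_le_sum_sin (L : ℕ) (ω : ℝ) :
    ‖Gfun L ω‖ ≤ ∑ k ∈ range (L + 1), sin (k * (π / L)) := by
  rw [Gfun_eq_sum_sin]
  refine (norm_sum_le _ _).trans (sum_le_sum fun k hk => ?_)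
  rw [norm_mul, norm_pow, Complex.norm_exp_ofReal_mul_I, one_pow, mul_one, Complex.norm_real,
    Real.norm_eq_abs,
    abs_of_nonneg (sin_natCast_mul_pi_div_nonneg (Nat.lt_succ_iff.1 (mem_range.1 hk)))]

theorem sum_sin_mul_sin_pi_div_two_mul (L : ℕ) (hL : L ≠ 0) :
    (∑ k ∈ range (L + 1), sin (k * (π / L))) * sin (π / (2 * L)) = cos (π / (2 * L)) := by
  set S := ∑ k ∈ range (L + 1), sin (k * (π / L))
  have hS : (2 - 2 * cos (π / L)) * S = 2 * sin (π / L) := by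
    have h := mul_sum_sin_pi_div_mul_pow L 1
    simp only [one_pow, mul_one, ← Complex.ofReal_sum] at h
    apply Complex.ofReal_injective
    simp only [Complex.ofReal_mul, Complex.ofReal_sub, Complex.ofReal_ofNat]
    linear_combination h
  have hsin : 0 < sin (π / (2 * L)) :=
    sin_pos_of_pos_of_lt_pi (by positivity) (div_lt_self pi_pos (by norm_cast; omega))
  rw [show π / L = 2 * (π / (2 * L)) by field_simp, cos_two_mul, sin_two_mul] at hS
  refine mul_left_cancel₀ (mul_ne_zero four_ne_zero hsin.ne') ?_
  linear_combination hS + 4 * S * sin_sq_add_cos_sq (π / (2 * L))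

theorem mul_cos_le_sin {x : ℝ} (hx₀ : 0 ≤ x) (hx : x ≤ π / 2) : x * cos x ≤ sin x := by
  rcases hx.lt_or_eq with hlt | rfl
  · have hcos : 0 < cos x := cos_pos_of_mem_Ioo ⟨by linarith [pi_pos], hlt⟩
    simpa [tan_eq_sin_div_cos, le_div_iff₀ hcos] using le_tan hx₀ hlt
  · simp

theorem norm_Gfun_le_two_mul_div_pi {L : ℕ} (hL : L ≠ 0) (ω : ℝ) :
    ‖Gfun L ω‖ ≤ 2 * L / π := by
  set x := π / (2 * L)
  have hL1 : (1 : ℝ) ≤ L := by exact_mod_cast Nat.one_le_iff_ne_zero.2 hL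
  have hx₀ : 0 < x := by positivity
  have hx : x ≤ π / 2 := div_le_div_of_nonneg_left pi_pos.le two_pos (by linarith)
  have hsin : 0 < sin x := sin_pos_of_pos_of_lt_pi hx₀ (by linarith [pi_pos])
  have hS := sum_sin_mul_sin_pi_div_two_mul L hL
  refine (norm_Gfun_le_sum_sin L ω).trans ?_
  rw [show 2 * (L : ℝ) / π = 1 / x by simp only [x]; field_simp, le_div_iff₀ hx₀]
  refine le_of_mul_le_mul_right ?_ hsin
  nlinarith [mul_cos_le_sin hx₀.le hx]

theorem sq_pi_lt_ten : π ^ 2 < 10 := by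
  nlinarith [pi_lt_d2, pi_pos]

-- Taylor's bound `sin y ≥ y - y ^ 3 / 6` at `y = π x`, with `π ^ 2 / 6` rounded up to `5 / 3`.
theorem pi_mul_mul_one_sub_le_sin {x : ℝ} (hx : 0 ≤ x) :
    π * x * (1 - 5 / 3 * x ^ 2) ≤ sin (π * x) := by
  have h := sin_ge_sub_cube (mul_nonneg pi_pos.le hx)
  have hπx : 0 ≤ π * x * x ^ 2 := by positivity
  nlinarith [mul_le_mul_of_nonneg_left sq_pi_lt_ten.le hπx]

theorem one_le_one_add_mul_mul_one_sub_sq_mul_one_sub_sq {u v : ℝ} (hv : 0 < v) (hvu : v ≤ u)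
    (hu : u ≤ 1 / 2) (hd : u - v ≤ 1 / 3) (hc : (u - v) ^ 2 ≤ 4 * (u * v)) :
    1 ≤ (1 + 16 * (u * v)) * ((1 - 5 / 3 * u ^ 2) * (1 - 5 / 3 * v ^ 2)) := by
  nlinarith [mul_nonneg hv.le (sub_nonneg.2 hvu), mul_nonneg (sub_nonneg.2 hu) hv.le,
    mul_nonneg (mul_nonneg hv.le hv.le) (sub_nonneg.2 hu),
    mul_nonneg (mul_pos hv hv).le (sub_nonneg.2 hc),
    mul_nonneg (mul_nonneg hv.le hv.le) (sub_nonneg.2 hd)]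

theorem sq_pi_mul_le_sin_mul_sin_of_le_half {u v : ℝ} (hv : 0 < v) (hvu : v ≤ u)
    (hu : u ≤ 1 / 2) (hd : u - v ≤ 1 / 3) (hc : (u - v) ^ 2 ≤ 4 * (u * v)) :
    π ^ 2 * (u * v) ≤ (1 + 16 * (u * v)) * (sin (π * u) * sin (π * v)) := by
  have hu₀ : 0 < u := hv.trans_le hvu
  have hv' : 0 ≤ π * v * (1 - 5 / 3 * v ^ 2) := by
    have : v ^ 2 ≤ 1 / 4 := by nlinarith
    have : 0 ≤ π * v := by positivity
    nlinarith
  have hsin : π * u * (1 - 5 / 3 * u ^ 2) * (π * v * (1 - 5 / 3 * v ^ 2)) ≤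
      sin (π * u) * sin (π * v) :=
    mul_le_mul (pi_mul_mul_one_sub_le_sin hu₀.le) (pi_mul_mul_one_sub_le_sin hv.le) hv'
      (sin_nonneg_of_nonneg_of_le_pi (by positivity) (by nlinarith [pi_pos]))
  have hpoly := one_le_one_add_mul_mul_one_sub_sq_mul_one_sub_sq hv hvu hu hd hc
  calc π ^ 2 * (u * v)
      ≤ π ^ 2 * (u * v) * ((1 + 16 * (u * v)) * ((1 - 5 / 3 * u ^ 2) * (1 - 5 / 3 * v ^ 2))) :=
        le_mul_of_one_le_right (by positivity) hpoly
    _ = (1 + 16 * (u * v)) * (π * u * (1 - 5 / 3 * u ^ 2) * (π * v * (1 - 5 / 3 * v ^ 2))) := by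
        ring
    _ ≤ (1 + 16 * (u * v)) * (sin (π * u) * sin (π * v)) := by gcongr

theorem sq_pi_mul_le_sin_mul_sin_of_half_le {u v : ℝ} (hv : 0 ≤ v) (hu : 1 / 2 ≤ u)
    (hd : u - v ≤ 1 / 3) (hs : u + v ≤ 1) :
    π ^ 2 * (u * v) ≤ (1 + 16 * (u * v)) * (sin (π * u) * sin (π * v)) := by
  have hπ := pi_pos
  have hprod : sin (π * u) * sin (π * v) = (cos (π * (u - v)) - cos (π * (u + v))) / 2 := by
    rw [mul_sub, mul_add, cos_sub, cos_add]
    ring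
  have hsum : cos (π * (u + v)) ≤ -cos (π * (u - v)) := by
    rw [← cos_pi_sub]
    exact cos_le_cos_of_nonneg_of_le_pi (by nlinarith) (by nlinarith) (by nlinarith)
  have hdiff : 1 / 2 ≤ cos (π * (u - v)) := by
    rw [← cos_pi_div_three]
    exact cos_le_cos_of_nonneg_of_le_pi (by nlinarith) (by linarith) (by nlinarith)
  have huv : u * v ≤ 1 / 4 := by nlinarith [sq_nonneg (u - v)]
  nlinarith [sq_pi_lt_ten, mul_nonneg hv (by linarith : (0 : ℝ) ≤ u)]

theorem sq_pi_mul_le_sin_mul_sin {u v : ℝ} (hv : 0 < v) (hvu : v ≤ u) (hd : u - v ≤ 1 / 3)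
    (hs : u + v ≤ 1) (hc : (u - v) ^ 2 ≤ 4 * (u * v)) :
    π ^ 2 * (u * v) ≤ (1 + 16 * (u * v)) * (sin (π * u) * sin (π * v)) := by
  rcases le_total u (1 / 2) with hu | hu
  · exact sq_pi_mul_le_sin_mul_sin_of_le_half hv hvu hu hd hc
  · exact sq_pi_mul_le_sin_mul_sin_of_half_le hv.le hu hd hs

theorem cos_two_pi_mul_sub_cos_pi_div (L : ℕ) (ω : ℝ) :
    cos (2 * π * ω) - cos (π / L) =
      -(2 * (sin (π * (ω + 1 / (2 * L))) * sin (π * (ω - 1 / (2 * L))))) := by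
  rw [cos_sub_cos]
  ring_nf

theorem norm_Gfun_le_div_sin_mul_sin (L : ℕ) {ω : ℝ}
    (h : 0 < sin (π * (ω + 1 / (2 * L))) * sin (π * (ω - 1 / (2 * L)))) :
    ‖Gfun L ω‖ ≤ π / L / (2 * (sin (π * (ω + 1 / (2 * L))) * sin (π * (ω - 1 / (2 * L))))) := by
  have h2 := mul_pos two_pos h
  have hG := norm_Gfun_le L (sub_ne_zero.1 (by
    rw [cos_two_pi_mul_sub_cos_pi_div]; exact neg_ne_zero.2 h2.ne'))
  rw [cos_two_pi_mul_sub_cos_pi_div, abs_neg, abs_of_pos h2] at hG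
  exact hG.trans (div_le_div_of_nonneg_right
    (abs_sin_le_abs.trans (abs_of_nonneg (by positivity)).le) h2.le)

theorem norm_Gfun_le_of_three_le {L : ℕ} (hL : 3 ≤ L) {ω : ℝ} (hω₀ : 0 ≤ ω) (hω : ω ≤ 1 / 2)
    (hLω : 2 ≤ 4 * (L : ℝ) ^ 2 * ω ^ 2) :
    ‖Gfun L ω‖ ≤ (2 / π) * L / |1 - 4 * (L : ℝ) ^ 2 * ω ^ 2| + 8 / (π * L) := by
  have hL₃ : (3 : ℝ) ≤ L := by exact_mod_cast hL
  have hG := norm_Gfun_le_div_sin_mul_sin (ω := ω) L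
  set u := ω + 1 / (2 * L)
  set v := ω - 1 / (2 * L)
  have hd : u - v = 1 / L := by simp only [u, v]; field_simp; ring
  have huv : 4 * (L : ℝ) ^ 2 * (u * v) = 4 * L ^ 2 * ω ^ 2 - 1 := by
    simp only [u, v]; field_simp; ring
  have hv : 0 < v := by
    have : 1 < 2 * L * ω := by nlinarith [mul_nonneg (by positivity : (0 : ℝ) ≤ L) hω₀]
    simp only [v]; rw [sub_pos, div_lt_iff₀ (by positivity)]; linarith
  have hvu : v ≤ u := by linarith [hd, (by positivity : (0 : ℝ) < 1 / L)]
  have hu : 0 < u := hv.trans_le hvu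
  have hc : (u - v) ^ 2 ≤ 4 * (u * v) := by
    rw [hd, div_pow, one_pow, div_le_iff₀ (by positivity)]; linarith
  have hd' : u - v ≤ 1 / 3 := by rw [hd]; gcongr
  have key := sq_pi_mul_le_sin_mul_sin hv hvu hd' (by simp only [u, v]; linarith) hc
  have hsin : 0 < sin (π * u) * sin (π * v) :=
    pos_of_mul_pos_right ((by positivity : 0 < π ^ 2 * (u * v)).trans_le key) (by positivity)
  rw [abs_of_neg (by linarith), neg_sub, ← huv]
  calc ‖Gfun L ω‖ ≤ π / L / (2 * (sin (π * u) * sin (π * v))) := hG hsin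
    _ ≤ (1 + 16 * (u * v)) / (2 * π * L * (u * v)) := by
      rw [div_le_div_iff₀ (by positivity) (by positivity)]
      calc π / L * (2 * π * L * (u * v)) = 2 * (π ^ 2 * (u * v)) := by field_simp
        _ ≤ _ := by linarith
    _ = (2 / π) * L / (4 * L ^ 2 * (u * v)) + 8 / (π * L) := by field_simp; ring

theorem stmt7 (L : ℕ) (hL : 1 ≤ L) :
    ∀ ω ∈ Set.Icc (0 : ℝ) (1 / 2), 4 * (L : ℝ) ^ 2 * ω ^ 2 ≠ 1 →
      ‖Gfun L ω‖ ≤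
        (2 / Real.pi) * (L : ℝ) / |1 - 4 * (L : ℝ) ^ 2 * ω ^ 2| + 8 / (Real.pi * L) := by
  rintro ω ⟨hω₀, hω⟩ hne
  by_cases hsharp : 3 ≤ L ∧ 2 ≤ 4 * (L : ℝ) ^ 2 * ω ^ 2
  · exact norm_Gfun_le_of_three_le hsharp.1 hω₀ hω hsharp.2
  have hM : 0 < |1 - 4 * (L : ℝ) ^ 2 * ω ^ 2| := abs_pos.2 (sub_ne_zero.2 hne.symm)
  have hL₁ : (1 : ℝ) ≤ L := by exact_mod_cast hL
  refine (norm_Gfun_le_two_mul_div_pi (by omega) ω).trans ?_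
  rcases not_and_or.1 hsharp with hL₃ | hsmall
  · have hL₂ : (L : ℝ) ≤ 2 := by exact_mod_cast (by omega : L ≤ 2)
    have : 2 * L / π ≤ 8 / (π * L) := by
      rw [div_le_div_iff₀ (by positivity) (by positivity)]
      have : (L : ℝ) ^ 2 ≤ 4 := by nlinarith
      nlinarith [mul_le_mul_of_nonneg_left this pi_pos.le]
    have : 0 ≤ (2 / π) * L / |1 - 4 * (L : ℝ) ^ 2 * ω ^ 2| := by positivity
    linarith
  · have hM₁ : |1 - 4 * (L : ℝ) ^ 2 * ω ^ 2| ≤ 1 := abs_le.2 ⟨by linarith, by nlinarith⟩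
    have : 2 * L / π ≤ (2 / π) * L / |1 - 4 * (L : ℝ) ^ 2 * ω ^ 2| := by
      rw [le_div_iff₀ hM]
      calc 2 * L / π * |1 - 4 * (L : ℝ) ^ 2 * ω ^ 2| ≤ 2 * L / π :=
            mul_le_of_le_one_right (by positivity) hM₁
        _ = 2 / π * L := by ring
    have : 0 ≤ 8 / (π * L) := by positivity
    linarith
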